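/- Let d ≥ 1 and let u₀ ∈ L²(ℝ^d) satisfy u₀ ≥ 0 almost everywhere. Let u(t,x) = (4πt)^{−d/2} ∫_{ℝ^d} e^{−|x−y|²/(4t)} u₀(y) dy be the solution of the heat equation. Then for every t > 0, every k ∈ ℤ^d, and every x ∈ Q_2(k), one has u(t,x) ≤ 2^{d−1} e^{d/t} · Σ_{n ∈ ℤ^d, ‖n−k‖_∞ ≤ 1} u(t,n). -/

import Mathlib

open Real MeasureTheory

/-- The solution of the heat equation on `ℝ^d` with initial datum `u₀`, given by convolution
with the Gaussian heat kernel. -/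
noncomputable def heatSolution (d : ℕ) (u₀ : EuclideanSpace ℝ (Fin d) → ℝ)
    (t : ℝ) (x : EuclideanSpace ℝ (Fin d)) : ℝ :=
  (4 * Real.pi * t) ^ (-(d : ℝ) / 2) * ∫ y, Real.exp (-‖x - y‖ ^ 2 / (4 * t)) * u₀ y

/-!
Given `y`, choose coordinatewise the neighbour of `k i` in `{k i - 1, k i, k i + 1}` nearest to
`y i`; the resulting lattice point `n` satisfies `|n - y|² ≤ |x - y|² + d/4`. Hence the heat kernel
centred at `x` is dominated by `e^{d/(16t)}` times the sum of the kernels centred at the `3^d`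
lattice points around `k`, and integrating this against `u₀ ≥ 0` bounds `u(t,x)`.
-/

open Finset

section Gaussian

variable {V : Type*} [NormedAddCommGroup V] [InnerProductSpace ℝ V] [FiniteDimensional ℝ V]
  [MeasurableSpace V] [BorelSpace V]

lemma integrable_exp_neg_mul_sq_norm_sub {b : ℝ} (hb : 0 < b) (c : V) :
    Integrable (fun y : V => rexp (-b * ‖c - y‖ ^ 2)) := by
  have hcexp := GaussianFourier.integrable_cexp_neg_mul_sq_norm_add (V := V)
    (b := b) (by simpa using hb) 0 0
  have hexp : Integrable (fun v : V => rexp (-b * ‖v‖ ^ 2)) :=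
    hcexp.norm.congr <| .of_forall fun v => by simp [Complex.norm_exp, ← Complex.ofReal_pow]
  exact hexp.comp_sub_left c

lemma memLp_two_exp_neg_sq_norm_sub_div {b : ℝ} (hb : 0 < b) (c : V) :
    MemLp (fun y : V => rexp (-‖c - y‖ ^ 2 / b)) 2 := by
  refine (memLp_two_iff_integrable_sq (by fun_prop)).2 ?_
  refine (integrable_exp_neg_mul_sq_norm_sub (b := 2 / b) (by positivity) c).congr
    (.of_forall fun y => ?_)
  simp only [← exp_nat_mul]
  ring_nf

lemma integrable_exp_neg_sq_norm_sub_div_mul {f : V → ℝ} (hf : MemLp f 2) {b : ℝ} (hb : 0 < b)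
    (c : V) : Integrable (fun y => rexp (-‖c - y‖ ^ 2 / b) * f y) :=
  (memLp_two_exp_neg_sq_norm_sub_div hb c).integrable_mul hf

end Gaussian

/-- The witness `b + e` is the point of `{b - 1, b, b + 1}` nearest to `c`. -/
lemma exists_shift_sq_sub_le {a b : ℝ} (hab : |a - b| ≤ 1) (c : ℝ) :
    ∃ e ∈ ({-1, 0, 1} : Finset ℤ), (b + e - c) ^ 2 ≤ (a - c) ^ 2 + 1 / 4 := by
  rw [abs_le] at hab
  rcases le_or_gt (b + 1 / 2) c with hb₁ | hb₁
  · refine ⟨1, by simp, ?_⟩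
    push_cast
    rcases le_or_gt c (b + 1) with hc | hc
    · nlinarith [sq_nonneg (a - c)]
    · nlinarith [mul_nonneg (by linarith : (0:ℝ) ≤ b + 1 - a)
        (by linarith : (0:ℝ) ≤ 2 * c - a - b - 1)]
  rcases le_or_gt c (b - 1 / 2) with hb₂ | hb₂
  · refine ⟨-1, by simp, ?_⟩
    push_cast
    rcases le_or_gt (b - 1) c with hc | hc
    · nlinarith [sq_nonneg (a - c)]
    · nlinarith [mul_nonneg (by linarith : (0:ℝ) ≤ a - (b - 1))
        (by linarith : (0:ℝ) ≤ a + b - 1 - 2 * c)]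
  · exact ⟨0, by simp, by push_cast; nlinarith [sq_nonneg (a - c)]⟩

section Lattice

variable {d : ℕ}

abbrev cubeOffsets (d : ℕ) : Finset (Fin d → ℤ) :=
  Fintype.piFinset fun _ => ({-1, 0, 1} : Finset ℤ)

abbrev latticePoint (k m : Fin d → ℤ) : EuclideanSpace ℝ (Fin d) :=
  WithLp.toLp 2 fun i => ((k i + m i : ℤ) : ℝ)

lemma exists_latticePoint_sq_dist_le (k : Fin d → ℤ) {x : EuclideanSpace ℝ (Fin d)}
    (hx : ∀ i, |x i - k i| ≤ 1) (y : EuclideanSpace ℝ (Fin d)) :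
    ∃ m ∈ cubeOffsets d, ‖latticePoint k m - y‖ ^ 2 ≤ ‖x - y‖ ^ 2 + d / 4 := by
  choose m hm hsq using fun i => exists_shift_sq_sub_le (hx i) (y i)
  refine ⟨m, Fintype.mem_piFinset.2 hm, ?_⟩
  simp only [EuclideanSpace.real_norm_sq_eq, PiLp.sub_apply]
  calc ∑ i, (((k i + m i : ℤ) : ℝ) - y i) ^ 2 ≤ ∑ i, ((x i - y i) ^ 2 + 1 / 4) :=
        sum_le_sum fun i _ => by push_cast; exact hsq i
    _ = ∑ i, (x i - y i) ^ 2 + d / 4 := by simp [sum_add_distrib, div_eq_mul_inv]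

lemma exp_neg_sq_norm_sub_le_sum_latticePoint {t : ℝ} (ht : 0 < t) (k : Fin d → ℤ)
    {x : EuclideanSpace ℝ (Fin d)} (hx : ∀ i, |x i - k i| ≤ 1) (y : EuclideanSpace ℝ (Fin d)) :
    rexp (-‖x - y‖ ^ 2 / (4 * t)) ≤
      rexp (d / t) * ∑ m ∈ cubeOffsets d, rexp (-‖latticePoint k m - y‖ ^ 2 / (4 * t)) := by
  obtain ⟨m, hm, hdist⟩ := exists_latticePoint_sq_dist_le k hx y
  calc rexp (-‖x - y‖ ^ 2 / (4 * t))
      ≤ rexp (d / t) * rexp (-‖latticePoint k m - y‖ ^ 2 / (4 * t)) := by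
        rw [← exp_add, exp_le_exp]
        have hd : (d : ℝ) / (16 * t) ≤ d / t :=
          div_le_div_of_nonneg_left (by positivity) ht (by linarith)
        have key : -‖x - y‖ ^ 2 / (4 * t) ≤ (d / 4 - ‖latticePoint k m - y‖ ^ 2) / (4 * t) := by
          gcongr
          linarith
        have hsplit : ((d : ℝ) / 4 - ‖latticePoint k m - y‖ ^ 2) / (4 * t) =
            d / (16 * t) + -‖latticePoint k m - y‖ ^ 2 / (4 * t) := by
          field_simp
          ring
        linarith
    _ ≤ _ := by
        gcongr
        exact single_le_sum (f := fun m => rexp (-‖latticePoint k m - y‖ ^ 2 / (4 * t)))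
          (fun _ _ => (exp_pos _).le) hm

end Lattice

section HeatSolution

variable {d : ℕ} {u₀ : EuclideanSpace ℝ (Fin d) → ℝ} {t : ℝ}

lemma heatSolution_nonneg (hu₀ : 0 ≤ᵐ[volume] u₀) (ht : 0 ≤ t) (x : EuclideanSpace ℝ (Fin d)) :
    0 ≤ heatSolution d u₀ t x :=
  mul_nonneg (rpow_nonneg (by positivity) _) <| integral_nonneg_of_ae <| by
    filter_upwards [hu₀] with y hy using mul_nonneg (exp_pos _).le hy

lemma heatSolution_le_of_exp_le {ι : Type*} (hu₀L2 : MemLp u₀ 2) (hu₀ : 0 ≤ᵐ[volume] u₀)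
    (ht : 0 < t) {x : EuclideanSpace ℝ (Fin d)} {s : Finset ι} {z : ι → EuclideanSpace ℝ (Fin d)}
    {c : ℝ} (hK : ∀ y, rexp (-‖x - y‖ ^ 2 / (4 * t)) ≤
      c * ∑ i ∈ s, rexp (-‖z i - y‖ ^ 2 / (4 * t))) :
    heatSolution d u₀ t x ≤ c * ∑ i ∈ s, heatSolution d u₀ t (z i) := by
  have hint := fun w => integrable_exp_neg_sq_norm_sub_div_mul hu₀L2 (by positivity : 0 < 4 * t) w
  have hmono : ∫ y, rexp (-‖x - y‖ ^ 2 / (4 * t)) * u₀ y ≤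
      ∫ y, c * ∑ i ∈ s, rexp (-‖z i - y‖ ^ 2 / (4 * t)) * u₀ y := by
    refine integral_mono_ae (hint x) ((integrable_finsetSum s fun i _ => hint (z i)).const_mul c) ?_
    filter_upwards [hu₀] with y hy
    calc _ ≤ (c * ∑ i ∈ s, rexp (-‖z i - y‖ ^ 2 / (4 * t))) * u₀ y :=
          mul_le_mul_of_nonneg_right (hK y) hy
      _ = _ := by rw [mul_assoc, sum_mul]
  rw [integral_const_mul, integral_finsetSum s fun i _ => hint (z i)] at hmono
  unfold heatSolution
  calc _ ≤ (4 * π * t) ^ (-(d : ℝ) / 2) *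
        (c * ∑ i ∈ s, ∫ y, rexp (-‖z i - y‖ ^ 2 / (4 * t)) * u₀ y) :=
        mul_le_mul_of_nonneg_left hmono (rpow_nonneg (by positivity) _)
    _ = _ := by rw [mul_left_comm, mul_sum]

end HeatSolution

theorem heat_pointwise_lattice_bound
    (d : ℕ) (u₀ : EuclideanSpace ℝ (Fin d) → ℝ)
    (hu₀L2 : MemLp u₀ 2 (volume : Measure (EuclideanSpace ℝ (Fin d))))
    (hu₀pos : 0 ≤ᵐ[volume] u₀) :
    ∀ t : ℝ, 0 < t → ∀ k : Fin d → ℤ,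
      ∀ x : EuclideanSpace ℝ (Fin d), (∀ i, |x i - (k i : ℝ)| ≤ 1) →
        heatSolution d u₀ t x ≤
          2 ^ (d - 1) * Real.exp ((d : ℝ) / t) *
            ∑ m ∈ Fintype.piFinset (fun _ : Fin d => ({-1, 0, 1} : Finset ℤ)),
              heatSolution d u₀ t (show EuclideanSpace ℝ (Fin d) from WithLp.toLp 2 (fun i => ((k i + m i : ℤ) : ℝ))) := by
  intro t ht k x hx
  have hsum : 0 ≤ ∑ m ∈ cubeOffsets d, heatSolution d u₀ t (latticePoint k m) :=
    sum_nonneg fun m _ => heatSolution_nonneg hu₀pos ht.le _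
  calc heatSolution d u₀ t x
      ≤ rexp (d / t) * ∑ m ∈ cubeOffsets d, heatSolution d u₀ t (latticePoint k m) :=
        heatSolution_le_of_exp_le hu₀L2 hu₀pos ht (exp_neg_sq_norm_sub_le_sum_latticePoint ht k hx)
    _ ≤ 2 ^ (d - 1) * rexp (d / t) * ∑ m ∈ cubeOffsets d, heatSolution d u₀ t (latticePoint k m) := by
        rw [mul_assoc]
        exact le_mul_of_one_le_left (mul_nonneg (exp_pos _).le hsum) (one_le_pow₀ (by norm_num))
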